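/- Fix ρ ∈ (0, cot²θ) and a Lipschitz cutoff χ : ℝ → [0,1] with χ(t) = 1 for |t| ≤ 1 and χ(t) = 0 for |t| ≥ 2, and for n > 0 set h_n(x₂) = F(x₂ tan θ)^ρ · χ(x₂/n). Then there exists n₀ > 0 such that R(h_n) < 0 for all n ≥ n₀. -/

import Mathlib

open Real MeasureTheory Set Filter

/-- `F α t = ∫_{-∞}^t e^{-α|x|} dx`. -/
noncomputable def F (α t : ℝ) : ℝ := ∫ x in Iio t, exp (-α * |x|)

/-- The half-plane-like domain `Ω = {(x₁,x₂) : x₁ < x₂ tan θ}`. -/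
def Omg (θ : ℝ) : Set (ℝ × ℝ) := {p | p.1 < p.2 * tan θ}

/-- The functional `R(g) = ∫ g'·(g'·F(x tanθ) − g·e^{-α|x|tanθ}·cot θ) dx`. -/
noncomputable def Rfun (α θ : ℝ) (g : ℝ → ℝ) : ℝ :=
  ∫ x : ℝ, deriv g x *
    (deriv g x * F α (x * tan θ) - g x * exp (-α * |x| * tan θ) * cot θ)

/-- The quantity `Λ(θ)` from the upper bound for the lowest eigenvalue. -/
noncomputable def Lam (θ : ℝ) : ℝ :=
  3 * cos θ ^ 6 * ((2:ℝ) ^ (2 * cos θ ^ 2) - 1) ^ 2 /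
    (2 * (1 + 2 * cos θ ^ 2) ^ 3 *
      (108 + 180 * cos θ ^ 2 - 132 * cos θ ^ 4 + 45 * cos θ ^ 6 - 5 * cos θ ^ 8))

/-!
On `|x| < n` the cutoff is invisible, and there the integrand of `R(h_n)` is that of
`R(g_ρ)`, namely `ρ tan θ (ρ tan θ - cot θ) F(x tan θ)^{2ρ-1} e^{-2α|x| tan θ}`, which is
negative everywhere because `ρ < cot² θ`. Beyond `|x| = 2n` the integrand vanishes. On
`n ≤ |x| ≤ 2n` exponential decay makes `g_ρ'` and `e^{-α|x| tan θ}` both `O(1/|x|)`, while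
`(χ(·/n))' = O(1/n)`; so the integrand is `O(1/n²)` on a set of length `4n`. Hence
`R(h_n) ≤ ∫_{-1}^{1} (integrand of R(g_ρ)) + O(1/n)`, which is negative for large `n`.
-/

open Topology

section F

variable {α : ℝ}

lemma integrable_exp_neg_mul_abs (hα : 0 < α) : Integrable (fun x : ℝ => exp (-α * |x|)) := by
  have hIic : IntegrableOn (fun x : ℝ => exp (-α * |x|)) (Iic 0) :=
    (integrableOn_exp_mul_Iic hα 0).congr_fun
      (fun x hx => by rw [abs_of_nonpos hx]; ring_nf) measurableSet_Iic
  have hIoi : IntegrableOn (fun x : ℝ => exp (-α * |x|)) (Ioi 0) :=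
    (integrableOn_exp_mul_Ioi (neg_lt_zero.2 hα) 0).congr_fun
      (fun x hx => by rw [abs_of_pos hx]) measurableSet_Ioi
  rw [← integrableOn_univ, ← Iic_union_Ioi (a := (0 : ℝ))]
  exact hIic.union hIoi

lemma integral_exp_neg_mul_abs (hα : 0 < α) : ∫ x : ℝ, exp (-α * |x|) = 2 / α := by
  rw [integral_comp_abs (f := fun y => exp (-α * y)), integral_exp_mul_Ioi (neg_lt_zero.2 hα)]
  field_simp
  simp

lemma F_of_nonpos (hα : 0 < α) {t : ℝ} (ht : t ≤ 0) : F α t = exp (α * t) / α := by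
  rw [F, ← integral_Iic_eq_integral_Iio, ← integral_exp_mul_Iic hα]
  refine setIntegral_congr_fun measurableSet_Iic fun x hx => ?_
  rw [abs_of_nonpos (mem_Iic.1 hx |>.trans ht)]
  ring_nf

lemma monotone_F (hα : 0 < α) : Monotone (F α) := fun _ _ hab =>
  setIntegral_mono_set (integrable_exp_neg_mul_abs hα).integrableOn
    (ae_of_all _ fun _ => (exp_pos _).le) (Iio_subset_Iio hab).eventuallyLE

lemma F_le_two_div (hα : 0 < α) (t : ℝ) : F α t ≤ 2 / α :=
  integral_exp_neg_mul_abs hα ▸ setIntegral_le_integral (integrable_exp_neg_mul_abs hα)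
    (ae_of_all _ fun _ => (exp_pos _).le)

lemma exp_neg_mul_abs_div_le_F (hα : 0 < α) (t : ℝ) : exp (-α * |t|) / α ≤ F α t := by
  calc exp (-α * |t|) / α = F α (-|t|) := by
        rw [F_of_nonpos hα (neg_nonpos.2 (abs_nonneg t))]; ring_nf
    _ ≤ F α t := monotone_F hα (neg_abs_le t)

lemma F_pos (hα : 0 < α) (t : ℝ) : 0 < F α t :=
  (div_pos (exp_pos _) hα).trans_le (exp_neg_mul_abs_div_le_F hα t)

lemma hasDerivAt_F (hα : 0 < α) (t : ℝ) : HasDerivAt (F α) (exp (-α * |t|)) t := by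
  have hint := integrable_exp_neg_mul_abs hα
  have hF : (fun s => F α 0 + ∫ x in (0 : ℝ)..s, exp (-α * |x|)) = F α := by
    ext s
    rw [← intervalIntegral.integral_Iic_sub_Iic hint.integrableOn hint.integrableOn, F, F,
      integral_Iic_eq_integral_Iio, integral_Iic_eq_integral_Iio, add_sub_cancel]
  rw [← hF]
  exact ((by fun_prop : Continuous fun x : ℝ => exp (-α * |x|)).integral_hasStrictDerivAt 0 t
    |>.hasDerivAt).const_add _

lemma continuous_F (hα : 0 < α) : Continuous (F α) :=
  continuous_iff_continuousAt.2 fun t => (hasDerivAt_F hα t).continuousAt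

end F

lemma rpow_le_rpow_add_rpow {a s b : ℝ} (p : ℝ) (ha : 0 < a) (has : a ≤ s) (hsb : s ≤ b) :
    s ^ p ≤ a ^ p + b ^ p := by
  rcases le_total p 0 with hp | hp
  · linarith [rpow_le_rpow_of_nonpos ha has hp, rpow_nonneg (ha.le.trans (has.trans hsb)) p]
  · linarith [rpow_le_rpow (ha.le.trans has) hsb hp, rpow_nonneg ha.le p]

lemma abs_mul_exp_neg_mul_abs_le {c : ℝ} (hc : 0 < c) (x : ℝ) :
    |x| * exp (-c * |x|) ≤ 1 / c := by
  rw [le_div_iff₀ hc]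
  calc |x| * exp (-c * |x|) * c = c * |x| * exp (-(c * |x|)) := by ring_nf
    _ ≤ exp (-1) := mul_exp_neg_le_exp_neg_one _
    _ ≤ 1 := exp_le_one_iff.2 (by norm_num)

section Profile

variable {α T ρ : ℝ}

/-- The paper's `g_ρ`, with `T` standing for `tan θ`. -/
noncomputable def profile (α T ρ x : ℝ) : ℝ := F α (x * T) ^ ρ

noncomputable def profileDeriv (α T ρ x : ℝ) : ℝ :=
  ρ * F α (x * T) ^ (ρ - 1) * (T * exp (-α * |x| * T))

lemma hasDerivAt_profile (hα : 0 < α) (hT : 0 < T) (x : ℝ) :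
    HasDerivAt (profile α T ρ) (profileDeriv α T ρ x) x := by
  have h := (hasDerivAt_F hα (x * T)).comp x ((hasDerivAt_id x).mul_const T)
  have h' := h.rpow_const (p := ρ) (Or.inl (F_pos hα _).ne')
  simp only [Function.comp_def, id] at h'
  refine h'.congr_deriv ?_
  rw [profileDeriv, abs_mul, abs_of_pos hT]
  ring_nf

lemma continuous_profile (hα : 0 < α) (hT : 0 < T) : Continuous (profile α T ρ) :=
  continuous_iff_continuousAt.2 fun x => (hasDerivAt_profile hα hT x).continuousAt

lemma continuous_profileDeriv (hα : 0 < α) : Continuous (profileDeriv α T ρ) := by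
  have := ((continuous_F hα).comp (continuous_mul_const T)).rpow_const (p := ρ - 1)
    fun x => Or.inl (F_pos hα _).ne'
  unfold profileDeriv
  fun_prop

lemma profile_pos (hα : 0 < α) (x : ℝ) : 0 < profile α T ρ x :=
  rpow_pos_of_pos (F_pos hα _) ρ

lemma profile_le (hα : 0 < α) (hρ : 0 ≤ ρ) (x : ℝ) : profile α T ρ x ≤ (2 / α) ^ ρ :=
  rpow_le_rpow (F_pos hα _).le (F_le_two_div hα _) hρ

lemma profileDeriv_nonneg (hα : 0 < α) (hT : 0 ≤ T) (hρ : 0 ≤ ρ) (x : ℝ) :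
    0 ≤ profileDeriv α T ρ x := by
  unfold profileDeriv
  have := rpow_nonneg (F_pos hα (x * T)).le (ρ - 1)
  positivity

/-- Since `e^{-α|x|T}/α ≤ F(xT) ≤ 2/α`, whatever the sign of `ρ - 1` the factor `F(xT)^{ρ-1}`
is at most the sum of the two endpoint powers, and both resulting terms of `g_ρ'` decay
exponentially. -/
lemma abs_mul_profileDeriv_le (hα : 0 < α) (hT : 0 < T) (hρ : 0 < ρ) (x : ℝ) :
    |x| * profileDeriv α T ρ x ≤ 1 / (α ^ (ρ - 1) * α) + ρ * (2 / α) ^ (ρ - 1) / α := by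
  set E := exp (-(α * T) * |x|)
  have hE : exp (-α * |x| * T) = E := by rw [show -α * |x| * T = -(α * T) * |x| by ring]
  have hlow : E / α ≤ F α (x * T) := by
    simpa [E, abs_mul, abs_of_pos hT, mul_assoc, mul_comm T] using
      exp_neg_mul_abs_div_le_F hα (x * T)
  have hsplit := rpow_le_rpow_add_rpow (ρ - 1) (by positivity) hlow (F_le_two_div hα (x * T))
  have hEρ : (E / α) ^ (ρ - 1) * E = exp (-(ρ * (α * T)) * |x|) / α ^ (ρ - 1) := by
    rw [div_rpow (exp_pos _).le hα.le, ← exp_mul, div_mul_eq_mul_div, ← exp_add]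
    ring_nf
  calc |x| * profileDeriv α T ρ x
      = ρ * T * (|x| * (F α (x * T) ^ (ρ - 1) * E)) := by rw [profileDeriv, hE]; ring
    _ ≤ ρ * T * (|x| * (((E / α) ^ (ρ - 1) + (2 / α) ^ (ρ - 1)) * E)) := by gcongr
    _ = T / α ^ (ρ - 1) * (ρ * (|x| * exp (-(ρ * (α * T)) * |x|)))
          + ρ * T * (2 / α) ^ (ρ - 1) * (|x| * E) := by rw [add_mul, hEρ]; ring
    _ ≤ T / α ^ (ρ - 1) * (ρ * (1 / (ρ * (α * T))))
          + ρ * T * (2 / α) ^ (ρ - 1) * (1 / (α * T)) := by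
        gcongr
        · exact abs_mul_exp_neg_mul_abs_le (by positivity) x
        · exact abs_mul_exp_neg_mul_abs_le (by positivity) x
    _ = 1 / (α ^ (ρ - 1) * α) + ρ * (2 / α) ^ (ρ - 1) / α := by field_simp

end Profile

lemma Real.cot_eq_inv_tan (x : ℝ) : cot x = (tan x)⁻¹ := by
  rw [cot_eq_cos_div_sin, tan_eq_sin_div_cos, inv_div]

section RIntegrand

variable {α θ ρ : ℝ}

noncomputable def rIntegrand (α θ a b x : ℝ) : ℝ :=
  a * (a * F α (x * tan θ) - b * exp (-α * |x| * tan θ) * cot θ)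

lemma Rfun_eq_integral_rIntegrand {g g' : ℝ → ℝ} (hg : ∀ᵐ x, HasDerivAt g (g' x) x) :
    Rfun α θ g = ∫ x, rIntegrand α θ (g' x) (g x) x :=
  integral_congr_ae (hg.mono fun x hx => by dsimp only; rw [hx.deriv]; rfl)

lemma abs_rIntegrand_le (hα : 0 < α) (hθ : 0 < tan θ) (a b x : ℝ) :
    |rIntegrand α θ a b x|
      ≤ |a| * (|a| * (2 / α) + |b| * (exp (-α * |x| * tan θ) * cot θ)) := by
  have hcot : 0 < cot θ := by rw [cot_eq_inv_tan]; positivity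
  rw [rIntegrand, abs_mul]
  gcongr
  refine (abs_sub _ _).trans (add_le_add ?_ ?_)
  · rw [abs_mul, abs_of_pos (F_pos hα _)]
    exact mul_le_mul_of_nonneg_left (F_le_two_div hα _) (abs_nonneg a)
  · rw [mul_assoc, abs_mul, abs_of_pos (mul_pos (exp_pos _) hcot)]

noncomputable def profileIntegrand (α θ ρ x : ℝ) : ℝ :=
  rIntegrand α θ (profileDeriv α (tan θ) ρ x) (profile α (tan θ) ρ x) x

lemma profileIntegrand_eq (hα : 0 < α) (x : ℝ) :
    profileIntegrand α θ ρ x = ρ * tan θ * (ρ * tan θ - cot θ)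
      * F α (x * tan θ) ^ (2 * ρ - 1) * exp (-α * |x| * tan θ) ^ 2 := by
  have hF := F_pos hα (x * tan θ)
  have hsplit :
      F α (x * tan θ) ^ (2 * ρ - 1) = F α (x * tan θ) ^ (ρ - 1) * F α (x * tan θ) ^ ρ := by
    rw [← rpow_add hF]; ring_nf
  have hF1 : F α (x * tan θ) ^ (ρ - 1) * F α (x * tan θ) = F α (x * tan θ) ^ ρ := by
    rw [← rpow_add_one hF.ne', sub_add_cancel]
  rw [profileIntegrand, rIntegrand, profileDeriv, profile, hsplit]
  linear_combination (ρ * F α (x * tan θ) ^ (ρ - 1) * (tan θ * exp (-α * |x| * tan θ))) *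
    (ρ * tan θ * exp (-α * |x| * tan θ)) * hF1

lemma profileIntegrand_neg (hα : 0 < α) (hθ : 0 < tan θ) (hρ : ρ ∈ Ioo 0 (cot θ ^ 2))
    (x : ℝ) : profileIntegrand α θ ρ x < 0 := by
  have hcot : ρ * tan θ - cot θ < 0 := by
    have hρ2 := hρ.2
    rw [cot_eq_inv_tan] at hρ2 ⊢
    rw [sub_neg, ← lt_div_iff₀ hθ]
    field_simp at hρ2 ⊢
    exact hρ2
  rw [profileIntegrand_eq hα]
  have hFρ := rpow_pos_of_pos (F_pos hα (x * tan θ)) (2 * ρ - 1)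
  have hρ0 := hρ.1
  refine mul_neg_of_neg_of_pos (mul_neg_of_neg_of_pos ?_ hFρ) (by positivity)
  exact mul_neg_of_pos_of_neg (by positivity) hcot

lemma continuous_profileIntegrand (hα : 0 < α) (hθ : 0 < tan θ) :
    Continuous (profileIntegrand α θ ρ) := by
  have := continuous_profile (ρ := ρ) hα hθ
  have := continuous_profileDeriv (T := tan θ) (ρ := ρ) hα
  have := (continuous_F hα).comp (continuous_mul_const (tan θ))
  unfold profileIntegrand rIntegrand
  fun_prop

end RIntegrand

/-- Rademacher's theorem, pulled back along `x ↦ x / n`, which preserves null sets. -/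
lemma LipschitzWith.ae_hasDerivAt_mul_comp_div {χ g g' : ℝ → ℝ} {K : NNReal} {n : ℝ}
    (hχ : LipschitzWith K χ) (hg : ∀ x, HasDerivAt g (g' x) x) (hn : n ≠ 0) :
    ∀ᵐ x, HasDerivAt (fun x => g x * χ (x / n))
      (g' x * χ (x / n) + g x * (deriv χ (x / n) / n)) x := by
  have hdiff : ∀ᵐ x : ℝ, DifferentiableAt ℝ χ (n⁻¹ • x) :=
    (Measure.quasiMeasurePreserving_smul volume (inv_ne_zero hn)).ae hχ.ae_differentiableAt
  filter_upwards [hdiff] with x hx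
  rw [smul_eq_mul, inv_mul_eq_div] at hx
  have hcomp := hx.hasDerivAt.comp x ((hasDerivAt_id' x).div_const n)
  exact ((hg x).mul hcomp).congr_deriv (by rw [Function.comp_apply, mul_one_div])

section Cutoff

variable {α θ ρ n x B : ℝ} {χ : ℝ → ℝ}

noncomputable def cutoffIntegrand (α θ ρ : ℝ) (χ : ℝ → ℝ) (n x : ℝ) : ℝ :=
  rIntegrand α θ
    (profileDeriv α (tan θ) ρ x * χ (x / n) + profile α (tan θ) ρ x * (deriv χ (x / n) / n))
    (profile α (tan θ) ρ x * χ (x / n)) x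

lemma Rfun_cutoff_eq {K : NNReal} (hα : 0 < α) (hθ : 0 < tan θ) (hχ : LipschitzWith K χ)
    (hn : n ≠ 0) :
    Rfun α θ (fun x => F α (x * tan θ) ^ ρ * χ (x / n))
      = ∫ x, cutoffIntegrand α θ ρ χ n x :=
  Rfun_eq_integral_rIntegrand (hχ.ae_hasDerivAt_mul_comp_div (hasDerivAt_profile hα hθ) hn)

lemma cutoffIntegrand_of_abs_lt (hχ1 : ∀ t, |t| ≤ 1 → χ t = 1) (hn : 0 < n) (hx : |x| < n) :
    cutoffIntegrand α θ ρ χ n x = profileIntegrand α θ ρ x := by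
  have hxn : |x / n| < 1 := by rwa [abs_div, abs_of_pos hn, div_lt_one hn]
  have hχ : χ =ᶠ[𝓝 (x / n)] fun _ => 1 :=
    eventually_of_mem ((isOpen_lt continuous_abs continuous_const).mem_nhds hxn)
      fun t ht => hχ1 t (le_of_lt ht)
  rw [cutoffIntegrand, hχ.deriv_eq, deriv_const, hχ1 _ hxn.le, profileIntegrand]
  simp

lemma cutoffIntegrand_of_lt_abs (hχ0 : ∀ t, 2 ≤ |t| → χ t = 0) (hn : 0 < n)
    (hx : 2 * n < |x|) :
    cutoffIntegrand α θ ρ χ n x = 0 := by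
  have hxn : 2 < |x / n| := by rwa [abs_div, abs_of_pos hn, lt_div_iff₀ hn]
  have hχ : χ =ᶠ[𝓝 (x / n)] fun _ => 0 :=
    eventually_of_mem ((isOpen_lt continuous_const continuous_abs).mem_nhds hxn)
      fun t ht => hχ0 t (le_of_lt ht)
  rw [cutoffIntegrand, hχ.deriv_eq, deriv_const, hχ0 _ hxn.le, rIntegrand]
  simp

lemma exists_abs_cutoffIntegrand_le {K : NNReal} (hα : 0 < α) (hθ : 0 < tan θ) (hρ : 0 < ρ)
    (hχ : LipschitzWith K χ) (hχ01 : ∀ t, χ t ∈ Icc (0 : ℝ) 1) :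
    ∃ C, ∀ n > 0, ∀ x, n ≤ |x| → |cutoffIntegrand α θ ρ χ n x| ≤ C / n ^ 2 := by
  set C₁ := 1 / (α ^ (ρ - 1) * α) + ρ * (2 / α) ^ (ρ - 1) / α
  set M := (2 / α) ^ ρ
  set P := C₁ + M * K
  set Q := cot θ / (α * tan θ)
  refine ⟨P * (P * (2 / α) + M * Q), fun n hn x hx => ?_⟩
  set v := profile α (tan θ) ρ x
  set v' := profileDeriv α (tan θ) ρ x
  set E := exp (-α * |x| * tan θ) * cot θ
  obtain ⟨hχ0, hχ1⟩ := hχ01 (x / n)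
  have hv : 0 < v := profile_pos hα x
  have hvM : v ≤ M := profile_le hα hρ.le x
  have hv'0 : 0 ≤ v' := profileDeriv_nonneg hα hθ.le hρ.le x
  have hv' : v' ≤ C₁ / n := by
    rw [le_div_iff₀ hn]
    nlinarith [abs_mul_profileDeriv_le hα hθ hρ x]
  have hχ' : |deriv χ (x / n)| ≤ K := norm_deriv_le_of_lipschitz hχ
  have hE0 : 0 ≤ E := mul_nonneg (exp_pos _).le (by rw [cot_eq_inv_tan]; positivity)
  have hE : E ≤ Q / n := by
    have hdecay : exp (-α * |x| * tan θ) * n ≤ 1 / (α * tan θ) := by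
      rw [show -α * |x| * tan θ = -(α * tan θ) * |x| by ring, mul_comm]
      exact (mul_le_mul_of_nonneg_right hx (exp_pos _).le).trans
        (abs_mul_exp_neg_mul_abs_le (mul_pos hα hθ) x)
    rw [le_div_iff₀ hn, mul_right_comm]
    calc exp (-α * |x| * tan θ) * n * cot θ ≤ 1 / (α * tan θ) * cot θ := by
          gcongr
          rw [cot_eq_inv_tan]
          positivity
      _ = Q := by ring
  have ha : |v' * χ (x / n) + v * (deriv χ (x / n) / n)| ≤ P / n :=
    calc _ ≤ v' * 1 + M * (K / n) := by
          refine (abs_add_le _ _).trans (add_le_add ?_ ?_)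
          · rw [abs_mul, abs_of_nonneg hv'0, abs_of_nonneg hχ0]
            gcongr
          · rw [abs_mul, abs_div, abs_of_pos hv, abs_of_pos hn]
            gcongr
      _ ≤ C₁ / n + M * (K / n) := by rw [mul_one]; gcongr
      _ = P / n := by ring
  have hb : |v * χ (x / n)| ≤ M := by
    rw [abs_mul, abs_of_pos hv, abs_of_nonneg hχ0]
    exact (mul_le_of_le_one_right hv.le hχ1).trans hvM
  calc |cutoffIntegrand α θ ρ χ n x|
      ≤ |_| * (|_| * (2 / α) + |_| * E) := abs_rIntegrand_le hα hθ _ _ _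
    _ ≤ P / n * (P / n * (2 / α) + M * (Q / n)) := by gcongr
    _ = P * (P * (2 / α) + M * Q) / n ^ 2 := by field_simp

lemma measurable_cutoffIntegrand (hα : 0 < α) (hθ : 0 < tan θ) (hχ : Continuous χ) :
    Measurable (cutoffIntegrand α θ ρ χ n) := by
  have := (continuous_profile (ρ := ρ) hα hθ).measurable
  have := (continuous_profileDeriv (T := tan θ) (ρ := ρ) hα).measurable
  have := (continuous_F hα).measurable.comp (measurable_mul_const (tan θ))
  have := (measurable_deriv χ).comp (measurable_div_const n)
  unfold cutoffIntegrand rIntegrand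
  fun_prop

lemma integrable_cutoffIntegrand (hα : 0 < α) (hθ : 0 < tan θ) (hχ : Continuous χ)
    (hχ1 : ∀ t, |t| ≤ 1 → χ t = 1) (hχ0 : ∀ t, 2 ≤ |t| → χ t = 0)
    (hn : 0 < n) (hB : ∀ x, n ≤ |x| → |cutoffIntegrand α θ ρ χ n x| ≤ B) :
    Integrable (cutoffIntegrand α θ ρ χ n) := by
  have hB0 : 0 ≤ B := (abs_nonneg _).trans (hB n (le_abs_self n))
  have hdom : IntegrableOn (fun x => |profileIntegrand α θ ρ x| + B) (Icc (-(2 * n)) (2 * n)) :=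
    ((continuous_profileIntegrand hα hθ).abs.add continuous_const).integrableOn_Icc
  refine (hdom.integrable_indicator measurableSet_Icc).mono'
    (measurable_cutoffIntegrand hα hθ hχ).aestronglyMeasurable
    (ae_of_all _ fun x => ?_)
  rw [Real.norm_eq_abs]
  rcases lt_or_ge (2 * n) |x| with hfar | hnear
  · rw [cutoffIntegrand_of_lt_abs hχ0 hn hfar, abs_zero]
    exact indicator_nonneg (fun _ _ => add_nonneg (abs_nonneg _) hB0) x
  rw [indicator_of_mem (show x ∈ Icc (-(2 * n)) (2 * n) from abs_le.1 hnear)]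
  rcases lt_or_ge |x| n with hnear' | hmid
  · rw [cutoffIntegrand_of_abs_lt hχ1 hn hnear']
    linarith
  · linarith [hB x hmid, abs_nonneg (profileIntegrand α θ ρ x)]

lemma cutoffIntegrand_le_indicator (hχ1 : ∀ t, |t| ≤ 1 → χ t = 1)
    (hχ0 : ∀ t, 2 ≤ |t| → χ t = 0) (hn : 1 < n)
    (hψ : ∀ x, profileIntegrand α θ ρ x ≤ 0)
    (hB : ∀ x, n ≤ |x| → |cutoffIntegrand α θ ρ χ n x| ≤ B) (x : ℝ) :
    cutoffIntegrand α θ ρ χ n x ≤ (Ioc (-1) 1).indicator (profileIntegrand α θ ρ) x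
      + (Icc (-(2 * n)) (2 * n)).indicator (fun _ => B) x := by
  have hn0 : 0 < n := one_pos.trans hn
  have hB0 : 0 ≤ B := (abs_nonneg _).trans (hB n (le_abs_self n))
  have htail : 0 ≤ (Icc (-(2 * n)) (2 * n)).indicator (fun _ => B) x :=
    indicator_nonneg (fun _ _ => hB0) x
  rcases lt_or_ge |x| n with hnear | hmid
  · rw [cutoffIntegrand_of_abs_lt hχ1 hn0 hnear]
    by_cases hx1 : x ∈ Ioc (-1) 1
    · rw [indicator_of_mem hx1]
      linarith
    · rw [indicator_of_notMem hx1]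
      linarith [hψ x]
  have hx1 : x ∉ Ioc (-1) 1 := fun h => by linarith [abs_le.2 ⟨h.1.le, h.2⟩]
  rw [indicator_of_notMem hx1, zero_add]
  rcases lt_or_ge (2 * n) |x| with hfar | hnear
  · rw [cutoffIntegrand_of_lt_abs hχ0 hn0 hfar]
    exact htail
  · rw [indicator_of_mem (show x ∈ Icc (-(2 * n)) (2 * n) from abs_le.1 hnear)]
    exact (le_abs_self _).trans (hB x hmid)

lemma exists_Rfun_cutoff_le {K : NNReal} (hα : 0 < α) (hθ : 0 < tan θ)
    (hρ : ρ ∈ Ioo 0 (cot θ ^ 2)) (hχ : LipschitzWith K χ)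
    (hχ01 : ∀ t, χ t ∈ Icc (0 : ℝ) 1)
    (hχ1 : ∀ t, |t| ≤ 1 → χ t = 1) (hχ0 : ∀ t, 2 ≤ |t| → χ t = 0) :
    ∃ C, ∀ n > 1, Rfun α θ (fun x => F α (x * tan θ) ^ ρ * χ (x / n))
      ≤ (∫ x in (-1)..1, profileIntegrand α θ ρ x) + C / n := by
  obtain ⟨C, hC⟩ := exists_abs_cutoffIntegrand_le hα hθ hρ.1 hχ hχ01
  refine ⟨4 * C, fun n hn => ?_⟩
  have hn0 : 0 < n := one_pos.trans hn
  have hψ : Integrable ((Ioc (-1) 1).indicator (profileIntegrand α θ ρ)) :=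
    (continuous_profileIntegrand hα hθ).integrableOn_Ioc.integrable_indicator measurableSet_Ioc
  have htail : Integrable ((Icc (-(2 * n)) (2 * n)).indicator fun _ => C / n ^ 2) :=
    (integrableOn_const measure_Icc_lt_top.ne).integrable_indicator measurableSet_Icc
  rw [Rfun_cutoff_eq hα hθ hχ hn0.ne', intervalIntegral.integral_of_le (by norm_num)]
  calc ∫ x, cutoffIntegrand α θ ρ χ n x
      ≤ ∫ x, (Ioc (-1) 1).indicator (profileIntegrand α θ ρ) x
          + (Icc (-(2 * n)) (2 * n)).indicator (fun _ => C / n ^ 2) x :=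
        integral_mono (integrable_cutoffIntegrand hα hθ hχ.continuous hχ1 hχ0 hn0 (hC n hn0))
          (hψ.add htail) (cutoffIntegrand_le_indicator hχ1 hχ0 hn
            (fun x => (profileIntegrand_neg hα hθ hρ x).le) (hC n hn0))
    _ = (∫ x in Ioc (-1) 1, profileIntegrand α θ ρ x) + 4 * C / n := by
        rw [integral_add hψ htail, integral_indicator measurableSet_Ioc,
          integral_indicator_const _ measurableSet_Icc, volume_real_Icc_of_le (by linarith),
          smul_eq_mul]
        field_simp
        ring

end Cutoff

lemma intervalIntegral_profileIntegrand_neg {α θ ρ : ℝ} (hα : 0 < α) (hθ : 0 < tan θ)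
    (hρ : ρ ∈ Ioo 0 (cot θ ^ 2)) : ∫ x in (-1)..1, profileIntegrand α θ ρ x < 0 := by
  have h := intervalIntegral.intervalIntegral_pos_of_pos
    ((continuous_profileIntegrand hα hθ).neg.intervalIntegrable (-1) 1)
    (fun x => neg_pos.2 (profileIntegrand_neg hα hθ hρ x)) (by norm_num)
  rwa [Pi.neg_def, intervalIntegral.integral_neg, neg_pos] at h

/-- `R(h_n) < 0` for all sufficiently large `n`, where
`h_n = g_ρ · χ(·/n)`. -/
theorem R_of_h_n_neg (α θ : ℝ) (hα : 0 < α) (hθ : θ ∈ Ioo 0 (π/2))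
    (ρ : ℝ) (hρ : ρ ∈ Ioo 0 (cot θ ^ 2))
    (χ : ℝ → ℝ) (hχlip : ∃ K, LipschitzWith K χ)
    (hχ01 : ∀ t, χ t ∈ Icc (0:ℝ) 1)
    (hχ1 : ∀ t, |t| ≤ 1 → χ t = 1)
    (hχ0 : ∀ t, 2 ≤ |t| → χ t = 0) :
    ∃ n₀ > (0:ℝ), ∀ n ≥ n₀,
      Rfun α θ (fun x => F α (x * tan θ) ^ ρ * χ (x / n)) < 0 := by
  obtain ⟨K, hχ⟩ := hχlip
  have hT : 0 < tan θ := tan_pos_of_pos_of_lt_pi_div_two hθ.1 hθ.2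
  obtain ⟨C, hC⟩ := exists_Rfun_cutoff_le hα hT hρ hχ hχ01 hχ1 hχ0
  set c₀ := ∫ x in (-1)..1, profileIntegrand α θ ρ x
  have hlim : Tendsto (fun n : ℝ => c₀ + C / n) atTop (𝓝 c₀) := by
    simpa using tendsto_const_nhds.add
      ((tendsto_const_nhds (x := C)).div_atTop (tendsto_id (α := ℝ)))
  obtain ⟨n₀, hn₀⟩ := eventually_atTop.1 <|
    (hlim.eventually (gt_mem_nhds (intervalIntegral_profileIntegrand_neg hα hT hρ))).and
      (eventually_gt_atTop 1)
  refine ⟨max n₀ 1, lt_max_of_lt_right one_pos, fun n hn => ?_⟩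
  obtain ⟨hneg, hn1⟩ := hn₀ n (le_of_max_le_left hn)
  exact (hC n hn1).trans_lt hneg
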